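/- Let h be a differentiable real function on an interval [a, b] with |h'(x)| ≤ M for all x ∈ [a, b], where M > 0. If h(b) > 0, then h(x) > 0 for all x in the interval (max(a, b − h(b)/M), b]. -/

import Mathlib

open Set

theorem le_image_of_abs_derivWithin_le {f : ℝ → ℝ} {a b M x : ℝ}
    (hf : DifferentiableOn ℝ f (Icc a b))
    (hbound : ∀ y ∈ Icc a b, |derivWithin f (Icc a b) y| ≤ M) (hx : x ∈ Icc a b) :
    f b - M * (b - x) ≤ f x := by
  have hb : b ∈ Icc a b := ⟨hx.1.trans hx.2, le_rfl⟩
  have hmvt := (convex_Icc a b).norm_image_sub_le_of_norm_derivWithin_le hf hbound hb hx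
  rw [Real.norm_eq_abs, Real.norm_eq_abs, abs_sub_comm x b,
    abs_of_nonneg (sub_nonneg.mpr hx.2)] at hmvt
  linarith [neg_abs_le (f x - f b)]

theorem stmt_6 (a b M : ℝ) (hM : 0 < M) (h : ℝ → ℝ)
    (hdiff : DifferentiableOn ℝ h (Set.Icc a b))
    (hbound : ∀ x ∈ Set.Icc a b, |derivWithin h (Set.Icc a b) x| ≤ M) :
    ∀ x ∈ Set.Ioc (max a (b - h b / M)) b, 0 < h x := by
  rintro x ⟨hx_gt, hxb⟩
  obtain ⟨hax, hx_slope⟩ := max_lt_iff.mp hx_gt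
  have hslope : (b - x) * M < h b := (lt_div_iff₀ hM).mp (by linarith)
  linarith [le_image_of_abs_derivWithin_le hdiff hbound ⟨hax.le, hxb⟩]
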